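/- arXiv:1804.08295 — 4 statements merged into one kernel-verified Lean document; each statement's English description precedes it below -/
import Mathlib

section
/- Let H be a Hilbert space with orthogonal decomposition H = ⊕_{n≥0} H⁽ⁿ⁾, and let G be a bounded operator on H mapping each H⁽ⁿ⁾ into H⁽ⁿ⁺¹⁾ such that there is C > 0 with ‖G ψ‖ ≤ C (n+1)^{-1/4} ‖ψ‖ for all ψ ∈ H⁽ⁿ⁾. Then 1 - G is boundedly invertible on H, with inverse (1-G)^{-1} = Σ_{j≥0} G^j, and ‖(1-G)^{-1}‖ ≤ Σ_{j≥0} C^j/(j!)^{1/4} < ∞. -/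
/-!
`G ^ j` maps `H⁽ⁿ⁾` into `H⁽ⁿ⁺ʲ⁾`, picking up the factors `C (n+i+1)^(-1/4) ≤ C (i+1)^(-1/4)`
for `i < j`, so on each `H⁽ⁿ⁾` its norm is at most `∏_{i<j} C (i+1)^(-1/4) = Cʲ/(j!)^(1/4)`.
As `n ↦ n + j` is injective, `G ^ j` keeps the pieces of a vector orthogonal, and Pythagoras
upgrades the piecewise bound to the operator norm. Consecutive bounds have ratio
`C (j+1)^(-1/4) → 0`, so the Neumann series `∑ G ^ j` converges absolutely and inverts `1 - G`.
-/

open Finset Filter Topology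

section Summability

theorem summable_prod_range_of_tendsto_zero {R : Type*} [NormedCommRing R] [CompleteSpace R]
    {c : ℕ → R} (hc : Tendsto c atTop (𝓝 0)) : Summable fun j => ∏ i ∈ range j, c i := by
  refine summable_of_ratio_norm_eventually_le (r := 1 / 2) (by norm_num) ?_
  filter_upwards [hc.norm.eventually_le_const (by norm_num : ‖(0 : R)‖ < 1 / 2)] with n hn
  rw [prod_range_succ, mul_comm (1 / 2 : ℝ)]
  exact (norm_mul_le _ _).trans (by gcongr)

theorem prod_range_mul_add_one_rpow_neg (C p : ℝ) (j : ℕ) :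
    ∏ i ∈ range j, C * ((i : ℝ) + 1) ^ (-p) = C ^ j / (j.factorial : ℝ) ^ p := by
  rw [prod_mul_distrib, prod_const, card_range, Real.finsetProd_rpow _ _ fun i _ => by positivity,
    Real.rpow_neg (by positivity), div_eq_mul_inv, ← prod_range_add_one_eq_factorial]
  push_cast
  rfl

theorem tendsto_mul_add_one_rpow_neg (C : ℝ) {p : ℝ} (hp : 0 < p) :
    Tendsto (fun n : ℕ => C * ((n : ℝ) + 1) ^ (-p)) atTop (𝓝 0) := by
  simpa using ((tendsto_rpow_neg_atTop hp).comp
    (tendsto_atTop_add_const_right _ 1 tendsto_natCast_atTop_atTop)).const_mul C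

theorem antitone_mul_add_one_rpow_neg {C p : ℝ} (hC : 0 ≤ C) (hp : 0 ≤ p) :
    Antitone fun n : ℕ => C * ((n : ℝ) + 1) ^ (-p) := fun m n hmn => by
  refine mul_le_mul_of_nonneg_left ?_ hC
  exact Real.rpow_le_rpow_of_nonpos (by positivity) (by gcongr) (neg_nonpos.2 hp)

end Summability

section Orthogonal

variable {𝕜 E ι : Type*} [RCLike 𝕜] [NormedAddCommGroup E] [InnerProductSpace 𝕜 E]

theorem norm_sum_sq_eq_sum_norm_sq_of_pairwise_inner_eq_zero {f : ι → E}
    (hf : Pairwise fun i j => inner 𝕜 (f i) (f j) = 0) (s : Finset ι) :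
    ‖∑ i ∈ s, f i‖ ^ 2 = ∑ i ∈ s, ‖f i‖ ^ 2 := by
  classical
  induction s using Finset.induction_on with
  | empty => simp
  | insert a s ha ih =>
    have hperp : inner 𝕜 (f a) (∑ i ∈ s, f i) = 0 := by
      rw [inner_sum]; exact sum_eq_zero fun i hi => hf (ne_of_mem_of_not_mem hi ha).symm
    rw [sum_insert ha, sum_insert ha, norm_add_sq (𝕜 := 𝕜), hperp, ih]
    simp

theorem HasSum.norm_sq_of_pairwise_inner_eq_zero {f : ι → E} {x : E}
    (hf : Pairwise fun i j => inner 𝕜 (f i) (f j) = 0) (h : HasSum f x) :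
    HasSum (fun i => ‖f i‖ ^ 2) (‖x‖ ^ 2) := by
  exact (((continuous_norm.pow 2).tendsto x).comp h).congr
    (norm_sum_sq_eq_sum_norm_sq_of_pairwise_inner_eq_zero hf)

variable [CompleteSpace E]

theorem inner_apply_eq_zero_of_comp_eq_zero {P Q : E →L[𝕜] E} (hP : IsSelfAdjoint P)
    (hPQ : P.comp Q = 0) (x y : E) : inner 𝕜 (P x) (Q y) = 0 := by
  rw [← hP.adjoint_eq, ContinuousLinearMap.adjoint_inner_left, ← P.comp_apply, hPQ,
    zero_apply, inner_zero_right]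

variable {P : ι → E →L[𝕜] E}

theorem opNorm_le_of_mapsTo_graded (hSelfAdj : ∀ n, IsSelfAdjoint (P n))
    (hOrth : Pairwise fun n m => (P n).comp (P m) = 0) (hComplete : ∀ ψ, HasSum (fun n => P n ψ) ψ)
    {T : E →L[𝕜] E} {σ : ι → ι} (hσ : σ.Injective) (hT : ∀ n ψ, P (σ n) (T (P n ψ)) = T (P n ψ))
    {M : ℝ} (hM : 0 ≤ M) (hbound : ∀ n ψ, ‖T (P n ψ)‖ ≤ M * ‖P n ψ‖) : ‖T‖ ≤ M := by
  refine T.opNorm_le_bound hM fun ψ => ?_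
  have hpieces : HasSum (fun n => ‖P n ψ‖ ^ 2) (‖ψ‖ ^ 2) :=
    (hComplete ψ).norm_sq_of_pairwise_inner_eq_zero fun n m hnm => by
      simpa using inner_apply_eq_zero_of_comp_eq_zero (hSelfAdj n) (hOrth hnm) ψ ψ
  have himage : HasSum (fun n => ‖T (P n ψ)‖ ^ 2) (‖T ψ‖ ^ 2) :=
    (T.hasSum (hComplete ψ)).norm_sq_of_pairwise_inner_eq_zero fun n m hnm => by
      dsimp only
      rw [← hT n, ← hT m]
      exact inner_apply_eq_zero_of_comp_eq_zero (hSelfAdj _) (hOrth (hσ.ne hnm)) _ _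
  have hsq : ‖T ψ‖ ^ 2 ≤ (M * ‖ψ‖) ^ 2 := by
    rw [mul_pow]
    exact hasSum_le (fun n => by rw [← mul_pow]; gcongr; exact hbound n ψ) himage
      (hpieces.mul_left _)
  exact (pow_le_pow_iff_left₀ (norm_nonneg _) (by positivity) two_ne_zero).mp hsq

end Orthogonal

section Raising

theorem pow_mul_eq_proj_mul_of_raising {M : Type*} [Monoid M] {P : ℕ → M} {G : M}
    (hProj : ∀ n, P n * P n = P n) (hGrade : ∀ n, G * P n = P (n + 1) * (G * P n)) (j n : ℕ) :
    G ^ j * P n = P (n + j) * (G ^ j * P n) := by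
  induction j with
  | zero => simp [hProj]
  | succ j ih =>
    rw [pow_succ', mul_assoc, ih, ← mul_assoc G, hGrade, ← add_assoc]
    simp only [← mul_assoc, hProj]

variable {𝕜 E : Type*} [RCLike 𝕜] [NormedAddCommGroup E] [InnerProductSpace 𝕜 E]
  {P : ℕ → E →L[𝕜] E} {G : E →L[𝕜] E} {c : ℕ → ℝ}

theorem norm_pow_apply_proj_le (hProj : ∀ n, (P n).comp (P n) = P n)
    (hGrade : ∀ n, G.comp (P n) = (P (n + 1)).comp (G.comp (P n)))
    (hc : Antitone c) (hc0 : ∀ n, 0 ≤ c n) (hG : ∀ n ψ, ‖G (P n ψ)‖ ≤ c n * ‖P n ψ‖) (j n : ℕ)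
    (ψ : E) : ‖(G ^ j) (P n ψ)‖ ≤ (∏ i ∈ range j, c i) * ‖P n ψ‖ := by
  induction j with
  | zero => simp
  | succ j ih =>
    have hgraded := congr($(pow_mul_eq_proj_mul_of_raising hProj hGrade j n) ψ)
    simp only [mul_apply_eq_comp] at hgraded
    calc ‖(G ^ (j + 1)) (P n ψ)‖ = ‖G (P (n + j) ((G ^ j) (P n ψ)))‖ := by
          rw [pow_succ', mul_apply_eq_comp, ← hgraded]
      _ ≤ c (n + j) * ‖(G ^ j) (P n ψ)‖ := (hG _ _).trans_eq (by rw [← hgraded])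
      _ ≤ c j * ((∏ i ∈ range j, c i) * ‖P n ψ‖) := by
          gcongr
          · exact hc0 j
          · exact hc (Nat.le_add_left j n)
      _ = (∏ i ∈ range (j + 1), c i) * ‖P n ψ‖ := by rw [prod_range_succ]; ring

theorem opNorm_pow_le_prod_of_raising [CompleteSpace E] (hProj : ∀ n, (P n).comp (P n) = P n)
    (hSelfAdj : ∀ n, IsSelfAdjoint (P n)) (hOrth : Pairwise fun n m => (P n).comp (P m) = 0)
    (hComplete : ∀ ψ, HasSum (fun n => P n ψ) ψ)
    (hGrade : ∀ n, G.comp (P n) = (P (n + 1)).comp (G.comp (P n)))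
    (hc : Antitone c) (hc0 : ∀ n, 0 ≤ c n) (hG : ∀ n ψ, ‖G (P n ψ)‖ ≤ c n * ‖P n ψ‖) (j : ℕ) :
    ‖G ^ j‖ ≤ ∏ i ∈ range j, c i :=
  opNorm_le_of_mapsTo_graded hSelfAdj hOrth hComplete (add_left_injective j)
    (fun n ψ => congr($(pow_mul_eq_proj_mul_of_raising hProj hGrade j n) ψ).symm)
    (prod_nonneg fun i _ => hc0 i) (norm_pow_apply_proj_le hProj hGrade hc hc0 hG j)

end Raising

/-- Neumann-series invertibility of `1 - G` for an operator `G` raising the grading of a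
Hilbert space `H = ⊕ₙ H⁽ⁿ⁾` (given by orthogonal projections `P n`) and satisfying
`‖Gψ‖ ≤ C (n+1)^{-1/4} ‖ψ‖` on `H⁽ⁿ⁾`: the inverse is `Σⱼ Gʲ` and its norm is at most
`Σⱼ Cʲ/(j!)^{1/4} < ∞`. -/
theorem neumann_inverse_of_graded_raising
    {H : Type*} [NormedAddCommGroup H] [InnerProductSpace ℂ H] [CompleteSpace H]
    (P : ℕ → (H →L[ℂ] H))
    (hProj : ∀ n, (P n).comp (P n) = P n)
    (hSelfAdj : ∀ n, IsSelfAdjoint (P n))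
    (hOrth : ∀ n m, n ≠ m → (P n).comp (P m) = 0)
    (hComplete : ∀ ψ : H, HasSum (fun n => P n ψ) ψ)
    (G : H →L[ℂ] H)
    (hGrade : ∀ n, G.comp (P n) = (P (n + 1)).comp (G.comp (P n)))
    (C : ℝ) (hC : 0 < C)
    (hGbound : ∀ n (ψ : H), ‖G (P n ψ)‖ ≤ C * ((n : ℝ) + 1) ^ (-(1 : ℝ) / 4) * ‖P n ψ‖) :
    Summable (fun j : ℕ => C ^ j / ((j.factorial : ℝ)) ^ ((1 : ℝ) / 4)) ∧
    ∃ Ginv : H →L[ℂ] H,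
      Ginv.comp (1 - G) = 1 ∧ (1 - G).comp Ginv = 1 ∧
      (∀ ψ : H, HasSum (fun j : ℕ => (G ^ j) ψ) (Ginv ψ)) ∧
      ‖Ginv‖ ≤ ∑' j : ℕ, C ^ j / ((j.factorial : ℝ)) ^ ((1 : ℝ) / 4) := by
  simp only [neg_div] at hGbound
  have hprod := prod_range_mul_add_one_rpow_neg C (1 / 4)
  have hsum : Summable fun j : ℕ => C ^ j / ((j.factorial : ℝ)) ^ ((1 : ℝ) / 4) := by
    rw [← funext hprod]
    exact summable_prod_range_of_tendsto_zero (tendsto_mul_add_one_rpow_neg C (by norm_num))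
  have hpow (j : ℕ) : ‖G ^ j‖ ≤ C ^ j / ((j.factorial : ℝ)) ^ ((1 : ℝ) / 4) := by
    rw [← hprod]
    exact opNorm_pow_le_prod_of_raising hProj hSelfAdj hOrth hComplete hGrade
      (antitone_mul_add_one_rpow_neg hC.le (by norm_num)) (fun n => by positivity) hGbound j
  have hneumann : Summable fun j => G ^ j := .of_norm_bounded hsum hpow
  exact ⟨hsum, ∑' j, G ^ j, hneumann.tsum_pow_mul_one_sub, hneumann.one_sub_mul_tsum_pow,
    fun ψ => (ContinuousLinearMap.apply ℂ H ψ).hasSum hneumann.hasSum,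
    tsum_of_norm_bounded hsum.hasSum hpow⟩
end

section
/- Under the hypotheses of the previous setting (G maps H⁽ⁿ⁾ to H⁽ⁿ⁺¹⁾ with ‖Gψ‖ ≤ C(n+1)^{-1/4}‖ψ‖ on H⁽ⁿ⁾, and additionally ‖n·(Gψ)‖ ≤ C n^{3/4}‖ψ‖ for ψ ∈ H⁽ⁿ⁻¹⁾), the operators 1-G and (1-G)^{-1} both map the domain of the number operator N (Nψ⁽ⁿ⁾ = n ψ⁽ⁿ⁾) into itself. -/
/-!
Write `y = Σⱼ tⱼ Gʲ ψ` with `|tⱼ| ≤ 1`; both `1 - G` and `(1 - G)⁻¹ = Σⱼ Gʲ` are of this form.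
Since `G` raises the degree by one, `Pₙ y = Σ_{j+m=n} tⱼ Gʲ Pₘ ψ`. Iterating the bound on `G` gives
`‖Gʲ Pₘ ψ‖ ≤ Cʲ ((m+1)⁽ʲ⁾)^{-1/4} ‖Pₘ ψ‖` with the rising factorial `(m+1)⁽ʲ⁾ ≥ (j-4)! (n/4)⁴`, so
`n ‖Gʲ Pₘ ψ‖ ≤ 4 Cʲ ((j-4)!)^{-1/4} (m+1) ‖Pₘ ψ‖`. The weights `Cʲ ((j-4)!)^{-1/4}` are summable,
hence `n ‖Pₙ y‖` is dominated by the convolution of an `ℓ¹` sequence with the `ℓ²` sequence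
`(m+1) ‖Pₘ ψ‖`, which lies in `ℓ²` by Cauchy–Schwarz.
-/

open Finset Filter Topology
open scoped Nat

theorem Nat.add_pow_four_mul_factorial_sub_four_le (j m : ℕ) :
    (j + m) ^ 4 * (j - 4)! ≤ 4 ^ 4 * (m + 1) ^ 4 * (m + 1).ascFactorial j := by
  rcases lt_or_ge j 4 with hj | hj
  · rw [Nat.sub_eq_zero_of_le hj.le, Nat.factorial_zero, mul_one, ← mul_pow]
    calc (j + m) ^ 4 ≤ (4 * (m + 1)) ^ 4 := Nat.pow_le_pow_left (by omega) 4
      _ ≤ (4 * (m + 1)) ^ 4 * (m + 1).ascFactorial j :=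
        Nat.le_mul_of_pos_right _ (Nat.ascFactorial_pos m j)
  · obtain ⟨k, rfl⟩ : ∃ k, j = k + 4 := ⟨j - 4, by omega⟩
    -- `(m+1)⁽ᵏ⁺⁴⁾ = (m+1)⁽ᵏ⁾ (m+k+1)⁽⁴⁾`; the first factor dominates `k!`, the second `((k+4+m)/4)⁴`
    have hfac : k ! ≤ (m + 1).ascFactorial k :=
      Nat.le_of_dvd (Nat.ascFactorial_pos m k) (Nat.factorial_dvd_ascFactorial _ _)
    have hpow : (k + 4 + m) ^ 4 ≤ 4 ^ 4 * (m + 1 + k).ascFactorial 4 :=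
      calc (k + 4 + m) ^ 4 ≤ (4 * (m + 1 + k)) ^ 4 := Nat.pow_le_pow_left (by omega) 4
        _ = 4 ^ 4 * (m + 1 + k) ^ 4 := mul_pow ..
        _ ≤ 4 ^ 4 * (m + 1 + k).ascFactorial 4 :=
          Nat.mul_le_mul_left _ (Nat.pow_succ_le_ascFactorial _ 4)
    rw [Nat.add_sub_cancel, ← Nat.ascFactorial_mul_ascFactorial]
    have hone : 1 ≤ (m + 1) ^ 4 := Nat.one_le_pow _ _ m.succ_pos
    calc (k + 4 + m) ^ 4 * k ! ≤ 4 ^ 4 * (m + 1 + k).ascFactorial 4 * (m + 1).ascFactorial k :=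
          Nat.mul_le_mul hpow hfac
      _ = 4 ^ 4 * ((m + 1).ascFactorial k * (m + 1 + k).ascFactorial 4) * 1 := by ring
      _ ≤ 4 ^ 4 * ((m + 1).ascFactorial k * (m + 1 + k).ascFactorial 4) * (m + 1) ^ 4 := by
          gcongr
      _ = 4 ^ 4 * (m + 1) ^ 4 * ((m + 1).ascFactorial k * (m + 1 + k).ascFactorial 4) := by ring

theorem add_mul_ascFactorial_rpow_le (j m : ℕ) :
    ((j + m : ℕ) : ℝ) * ((m + 1).ascFactorial j : ℝ) ^ (-(1 : ℝ) / 4) ≤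
      4 * ((j - 4)! : ℝ) ^ (-(1 : ℝ) / 4) * (m + 1) := by
  have hA : (0 : ℝ) < (m + 1).ascFactorial j := by exact_mod_cast Nat.ascFactorial_pos m j
  have hF : (0 : ℝ) < (j - 4)! := by exact_mod_cast Nat.factorial_pos _
  have hroot : ∀ x : ℝ, 0 ≤ x → (x ^ (1 / 4 : ℝ)) ^ 4 = x := fun x hx => by
    rw [← Real.rpow_natCast, ← Real.rpow_mul hx]; norm_num
  have hnat : ((j + m : ℕ) : ℝ) ^ 4 * (j - 4)! ≤ (4 * (m + 1)) ^ 4 * (m + 1).ascFactorial j := by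
    rw [mul_pow]; exact_mod_cast Nat.add_pow_four_mul_factorial_sub_four_le j m
  have h4 : ((j + m : ℕ) : ℝ) * ((j - 4)! : ℝ) ^ (1 / 4 : ℝ) ≤
      4 * (m + 1) * ((m + 1).ascFactorial j : ℝ) ^ (1 / 4 : ℝ) := by
    refine le_of_pow_le_pow_left₀ four_ne_zero (by positivity) ?_
    rwa [mul_pow, mul_pow, hroot _ hF.le, hroot _ hA.le]
  rw [neg_div, Real.rpow_neg hA.le, Real.rpow_neg hF.le, ← div_eq_mul_inv,
    div_le_iff₀ (by positivity)]
  have hF4 : (0 : ℝ) < ((j - 4)! : ℝ) ^ (1 / 4 : ℝ) := by positivity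
  calc ((j + m : ℕ) : ℝ) ≤ 4 * (m + 1) * ((m + 1).ascFactorial j : ℝ) ^ (1 / 4 : ℝ) /
        ((j - 4)! : ℝ) ^ (1 / 4 : ℝ) := (le_div_iff₀ hF4).2 h4
    _ = _ := by ring

theorem summable_pow_mul_factorial_rpow (x : ℝ) {q : ℝ} (hq : q < 0) :
    Summable fun k : ℕ => x ^ k * (k ! : ℝ) ^ q := by
  have hlim : Tendsto (fun k : ℕ => |x| * ((k + 1 : ℕ) : ℝ) ^ q) atTop (𝓝 0) := by
    have := (tendsto_rpow_neg_atTop (neg_pos.2 hq)).comp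
      (tendsto_natCast_atTop_atTop.comp (tendsto_add_atTop_nat 1))
    simpa only [neg_neg, mul_zero, Function.comp_def] using this.const_mul |x|
  refine summable_of_ratio_norm_eventually_le (r := 1 / 2) (by norm_num) ?_
  filter_upwards [hlim.eventually (ge_mem_nhds (by norm_num : (0 : ℝ) < 1 / 2))] with k hk
  have hnorm : ∀ k : ℕ, ‖x ^ k * (k ! : ℝ) ^ q‖ = |x| ^ k * (k ! : ℝ) ^ q := fun k => by
    rw [Real.norm_eq_abs, abs_mul, abs_pow, abs_of_nonneg (Real.rpow_nonneg (Nat.cast_nonneg _) q)]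
  rw [hnorm, hnorm, Nat.factorial_succ, Nat.cast_mul, Real.mul_rpow (by positivity) (by positivity)]
  calc |x| ^ (k + 1) * (((k + 1 : ℕ) : ℝ) ^ q * (k ! : ℝ) ^ q)
      = |x| * ((k + 1 : ℕ) : ℝ) ^ q * (|x| ^ k * (k ! : ℝ) ^ q) := by ring
    _ ≤ 1 / 2 * (|x| ^ k * (k ! : ℝ) ^ q) := by gcongr

theorem summable_pow_mul_factorial_sub_rpow (x : ℝ) {q : ℝ} (hq : q < 0) (d : ℕ) :
    Summable fun j : ℕ => x ^ j * ((j - d)! : ℝ) ^ q := by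
  refine (summable_nat_add_iff d).1 ?_
  refine ((summable_pow_mul_factorial_rpow x hq).mul_left (x ^ d)).congr fun k => ?_
  rw [Nat.add_sub_cancel, pow_add]
  ring

theorem summable_sq_sum_antidiagonal_mul {b c : ℕ → ℝ} (hb₀ : ∀ j, 0 ≤ b j) (hb : Summable b)
    (hc : Summable fun m => c m ^ 2) :
    Summable fun n => (∑ p ∈ antidiagonal n, b p.1 * c p.2) ^ 2 := by
  have hconv : Summable fun n => ∑ p ∈ antidiagonal n, b p.1 * c p.2 ^ 2 :=
    summable_sum_mul_antidiagonal_of_summable_mul (f := b) (g := fun m => c m ^ 2)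
      (hb.mul_of_nonneg hc hb₀ fun m => sq_nonneg (c m))
  refine (hconv.mul_left (∑' j, b j)).of_nonneg_of_le (fun n => sq_nonneg _) fun n => ?_
  have hpartial : ∑ p ∈ antidiagonal n, b p.1 ≤ ∑' j, b j := by
    rw [Nat.sum_antidiagonal_eq_sum_range_succ_mk]
    exact hb.sum_le_tsum _ fun j _ => hb₀ j
  calc (∑ p ∈ antidiagonal n, b p.1 * c p.2) ^ 2
      ≤ (∑ p ∈ antidiagonal n, b p.1) * ∑ p ∈ antidiagonal n, b p.1 * c p.2 ^ 2 :=
        sum_sq_le_sum_mul_sum_of_sq_le_mul _ (fun p _ => hb₀ p.1)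
          (fun p _ => mul_nonneg (hb₀ p.1) (sq_nonneg _)) fun p _ => by ring_nf; rfl
    _ ≤ (∑' j, b j) * ∑ p ∈ antidiagonal n, b p.1 * c p.2 ^ 2 := by
        gcongr
        exact sum_nonneg fun p _ => mul_nonneg (hb₀ p.1) (sq_nonneg _)

theorem summable_add_one_sq_mul {f : ℕ → ℝ} (hf₀ : ∀ n, 0 ≤ f n)
    (hf : Summable fun n : ℕ => (n : ℝ) ^ 2 * f n) :
    Summable fun n : ℕ => ((n : ℝ) + 1) ^ 2 * f n := by
  rw [← summable_nat_add_iff 1]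
  refine (((summable_nat_add_iff 1).2 hf).mul_left 4).of_nonneg_of_le
    (fun n => mul_nonneg (sq_nonneg _) (hf₀ _)) fun n => ?_
  push_cast
  nlinarith [mul_nonneg (by positivity : (0 : ℝ) ≤ 3 * n ^ 2 + 4 * n) (hf₀ (n + 1))]

section Graded

variable {R E : Type*} [Semiring R] [AddCommMonoid E] [TopologicalSpace E] [Module R E]
  {P : ℕ → E →L[R] E} {G : E →L[R] E}

theorem proj_add_pow_apply_proj (hProj : ∀ n, (P n).comp (P n) = P n)
    (hGrade : ∀ n, G.comp (P n) = (P (n + 1)).comp (G.comp (P n))) (j m : ℕ) (x : E) :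
    P (m + j) ((G ^ j) (P m x)) = (G ^ j) (P m x) := by
  induction j with
  | zero => simpa using congr($(hProj m) x)
  | succ j ih =>
    have hstep := congr($(hGrade (m + j)) ((G ^ j) (P m x)))
    simp only [ContinuousLinearMap.comp_apply, ih] at hstep
    rw [pow_succ']
    exact hstep.symm

variable [T2Space E]

theorem proj_pow_apply (hProj : ∀ n, (P n).comp (P n) = P n)
    (hOrth : ∀ n m, n ≠ m → (P n).comp (P m) = 0) (hComplete : ∀ x : E, HasSum (fun n => P n x) x)
    (hGrade : ∀ n, G.comp (P n) = (P (n + 1)).comp (G.comp (P n))) (j n : ℕ) (x : E) :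
    P n ((G ^ j) x) = if j ≤ n then (G ^ j) (P (n - j) x) else 0 := by
  have hterm : ∀ m, P n ((G ^ j) (P m x)) = if m + j = n then (G ^ j) (P m x) else 0 := by
    intro m
    rw [← proj_add_pow_apply_proj hProj hGrade j m x]
    split_ifs with h
    · rw [h, ← ContinuousLinearMap.comp_apply, hProj]
    · rw [← ContinuousLinearMap.comp_apply, hOrth n (m + j) (Ne.symm h)]
      rfl
  have hsum : HasSum (fun m => if m + j = n then (G ^ j) (P m x) else 0) (P n ((G ^ j) x)) := by
    simpa only [hterm] using (P n).hasSum ((G ^ j).hasSum (hComplete x))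
  split_ifs with hj
  · rw [hsum.unique (hasSum_single (n - j) fun m hm => if_neg (by omega)), if_pos (by omega)]
  · refine hsum.unique ?_
    convert hasSum_zero with m
    simp only [ite_eq_right_iff]
    omega

theorem proj_eq_sum_antidiagonal_of_hasSum (hProj : ∀ n, (P n).comp (P n) = P n)
    (hOrth : ∀ n m, n ≠ m → (P n).comp (P m) = 0) (hComplete : ∀ x : E, HasSum (fun n => P n x) x)
    (hGrade : ∀ n, G.comp (P n) = (P (n + 1)).comp (G.comp (P n))) {t : ℕ → R} {x y : E}
    (hy : HasSum (fun j => t j • (G ^ j) x) y) (n : ℕ) :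
    P n y = ∑ p ∈ antidiagonal n, t p.1 • (G ^ p.1) (P p.2 x) := by
  have hsum := (P n).hasSum hy
  simp only [map_smul, proj_pow_apply hProj hOrth hComplete hGrade] at hsum
  rw [Nat.sum_antidiagonal_eq_sum_range_succ_mk, hsum.unique (hasSum_sum_of_ne_finset_zero fun j hj => ?_)]
  · refine sum_congr rfl fun j hj => ?_
    rw [if_pos (Nat.lt_succ_iff.1 (mem_range.1 hj))]
  · rw [if_neg (by simpa [Nat.lt_succ_iff] using hj), smul_zero]

end Graded

section Normed

variable {𝕜 E : Type*} [NormedField 𝕜] [NormedAddCommGroup E] [NormedSpace 𝕜 E]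
  {P : ℕ → E →L[𝕜] E} {G : E →L[𝕜] E} {C : ℝ}

theorem norm_pow_apply_proj_le_s4 (hProj : ∀ n, (P n).comp (P n) = P n)
    (hGrade : ∀ n, G.comp (P n) = (P (n + 1)).comp (G.comp (P n))) (hC : 0 ≤ C)
    (hGbound : ∀ n (x : E), ‖G (P n x)‖ ≤ C * ((n : ℝ) + 1) ^ (-(1 : ℝ) / 4) * ‖P n x‖)
    (j m : ℕ) (x : E) :
    ‖(G ^ j) (P m x)‖ ≤ C ^ j * ((m + 1).ascFactorial j : ℝ) ^ (-(1 : ℝ) / 4) * ‖P m x‖ := by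
  induction j with
  | zero => simp
  | succ j ih =>
    have hstep := hGbound (m + j) ((G ^ j) (P m x))
    rw [proj_add_pow_apply_proj hProj hGrade] at hstep
    have hcast : ((m + 1 + j : ℕ) : ℝ) = ((m + j : ℕ) : ℝ) + 1 := by push_cast; ring
    rw [pow_succ', Nat.ascFactorial_succ, Nat.cast_mul, hcast,
      Real.mul_rpow (by positivity) (by positivity)]
    calc ‖G ((G ^ j) (P m x))‖
        ≤ C * (((m + j : ℕ) : ℝ) + 1) ^ (-(1 : ℝ) / 4) * ‖(G ^ j) (P m x)‖ := hstep
      _ ≤ C * (((m + j : ℕ) : ℝ) + 1) ^ (-(1 : ℝ) / 4) *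
          (C ^ j * ((m + 1).ascFactorial j : ℝ) ^ (-(1 : ℝ) / 4) * ‖P m x‖) := by gcongr
      _ = _ := by ring

theorem add_mul_norm_pow_apply_proj_le (hProj : ∀ n, (P n).comp (P n) = P n)
    (hGrade : ∀ n, G.comp (P n) = (P (n + 1)).comp (G.comp (P n))) (hC : 0 ≤ C)
    (hGbound : ∀ n (x : E), ‖G (P n x)‖ ≤ C * ((n : ℝ) + 1) ^ (-(1 : ℝ) / 4) * ‖P n x‖)
    (j m : ℕ) (x : E) :
    ((j + m : ℕ) : ℝ) * ‖(G ^ j) (P m x)‖ ≤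
      4 * (C ^ j * ((j - 4)! : ℝ) ^ (-(1 : ℝ) / 4)) * ((m + 1) * ‖P m x‖) :=
  calc ((j + m : ℕ) : ℝ) * ‖(G ^ j) (P m x)‖
      ≤ ((j + m : ℕ) : ℝ) * (C ^ j * ((m + 1).ascFactorial j : ℝ) ^ (-(1 : ℝ) / 4) * ‖P m x‖) := by
        gcongr; exact norm_pow_apply_proj_le_s4 hProj hGrade hC hGbound j m x
    _ = C ^ j * ‖P m x‖ * (((j + m : ℕ) : ℝ) * ((m + 1).ascFactorial j : ℝ) ^ (-(1 : ℝ) / 4)) := by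
        ring
    _ ≤ C ^ j * ‖P m x‖ * (4 * ((j - 4)! : ℝ) ^ (-(1 : ℝ) / 4) * (m + 1)) :=
        mul_le_mul_of_nonneg_left (add_mul_ascFactorial_rpow_le j m) (by positivity)
    _ = _ := by ring

theorem summable_sq_mul_norm_proj_of_hasSum (hProj : ∀ n, (P n).comp (P n) = P n)
    (hOrth : ∀ n m, n ≠ m → (P n).comp (P m) = 0) (hComplete : ∀ x : E, HasSum (fun n => P n x) x)
    (hGrade : ∀ n, G.comp (P n) = (P (n + 1)).comp (G.comp (P n))) (hC : 0 ≤ C)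
    (hGbound : ∀ n (x : E), ‖G (P n x)‖ ≤ C * ((n : ℝ) + 1) ^ (-(1 : ℝ) / 4) * ‖P n x‖)
    {t : ℕ → 𝕜} (ht : ∀ j, ‖t j‖ ≤ 1) {x y : E} (hy : HasSum (fun j => t j • (G ^ j) x) y)
    (hx : Summable fun n : ℕ => (n : ℝ) ^ 2 * ‖P n x‖ ^ 2) :
    Summable fun n : ℕ => (n : ℝ) ^ 2 * ‖P n y‖ ^ 2 := by
  set w : ℕ → ℝ := fun j => 4 * (C ^ j * ((j - 4)! : ℝ) ^ (-(1 : ℝ) / 4))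
  set c : ℕ → ℝ := fun m => (m + 1) * ‖P m x‖
  have hw : Summable w := (summable_pow_mul_factorial_sub_rpow C (by norm_num) 4).mul_left 4
  have hc : Summable fun m => c m ^ 2 := by
    simpa only [c, mul_pow] using summable_add_one_sq_mul (fun n => sq_nonneg ‖P n x‖) hx
  refine (summable_sq_sum_antidiagonal_mul (fun j => by positivity) hw hc).of_nonneg_of_le
    (fun n => by positivity) fun n => ?_
  rw [← mul_pow]
  gcongr
  rw [proj_eq_sum_antidiagonal_of_hasSum hProj hOrth hComplete hGrade hy]
  calc (n : ℝ) * ‖∑ p ∈ antidiagonal n, t p.1 • (G ^ p.1) (P p.2 x)‖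
      ≤ ∑ p ∈ antidiagonal n, (n : ℝ) * ‖(G ^ p.1) (P p.2 x)‖ := by
        rw [← mul_sum]
        gcongr
        refine (norm_sum_le _ _).trans (sum_le_sum fun p _ => ?_)
        rw [norm_smul]
        exact mul_le_of_le_one_left (norm_nonneg _) (ht p.1)
    _ ≤ ∑ p ∈ antidiagonal n, w p.1 * c p.2 := by
        refine sum_le_sum fun p hp => ?_
        rw [← mem_antidiagonal.1 hp]
        exact add_mul_norm_pow_apply_proj_le hProj hGrade hC hGbound p.1 p.2 x

end Normed

theorem hasSum_one_sub_apply {R E : Type*} [Ring R] [AddCommGroup E] [TopologicalSpace E]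
    [IsTopologicalAddGroup E] [Module R E] (G : E →L[R] E) (x : E) :
    HasSum (fun j => (if j = 0 then 1 else if j = 1 then -1 else 0 : R) • (G ^ j) x)
      ((1 - G) x) := by
  have hvanish : ∀ j ∉ range 2,
      (if j = 0 then 1 else if j = 1 then -1 else 0 : R) • (G ^ j) x = 0 := fun j hj => by
    rw [if_neg, if_neg, zero_smul] <;> simp only [mem_range] at hj <;> omega
  convert hasSum_sum_of_ne_finset_zero (L := .unconditional ℕ) hvanish using 1
  simp [sum_range_succ, sub_eq_add_neg]

theorem one_sub_G_and_inverse_preserve_number_domain_general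
    {H : Type*} [NormedAddCommGroup H] [InnerProductSpace ℂ H]
    (P : ℕ → (H →L[ℂ] H))
    (hProj : ∀ n, (P n).comp (P n) = P n)
    (hOrth : ∀ n m, n ≠ m → (P n).comp (P m) = 0)
    (hComplete : ∀ ψ : H, HasSum (fun n => P n ψ) ψ)
    (G : H →L[ℂ] H)
    (hGrade : ∀ n, G.comp (P n) = (P (n + 1)).comp (G.comp (P n)))
    (C : ℝ) (hC : 0 < C)
    (hGbound : ∀ n (ψ : H), ‖G (P n ψ)‖ ≤ C * ((n : ℝ) + 1) ^ (-(1 : ℝ) / 4) * ‖P n ψ‖)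
    (Ginv : H →L[ℂ] H)
    (hGinvSum : ∀ ψ : H, HasSum (fun j : ℕ => (G ^ j) ψ) (Ginv ψ)) :
    ∀ ψ : H, Summable (fun n : ℕ => ((n : ℝ) ^ 2) * ‖P n ψ‖ ^ 2) →
      (Summable (fun n : ℕ => ((n : ℝ) ^ 2) * ‖P n ((1 - G) ψ)‖ ^ 2) ∧
       Summable (fun n : ℕ => ((n : ℝ) ^ 2) * ‖P n (Ginv ψ)‖ ^ 2)) := by
  intro ψ hψ
  refine ⟨summable_sq_mul_norm_proj_of_hasSum hProj hOrth hComplete hGrade hC.le hGbound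
      (fun j => ?_) (hasSum_one_sub_apply G ψ) hψ,
    summable_sq_mul_norm_proj_of_hasSum hProj hOrth hComplete hGrade hC.le hGbound
      (t := fun _ => 1) (fun _ => norm_one.le) (by simpa only [one_smul] using hGinvSum ψ) hψ⟩
  split_ifs <;> simp

/-- Invariance of the domain of the number operator: in the graded setting of the Neumann-series
lemma, if moreover `‖n · G ψ‖ ≤ C n^{3/4} ‖ψ‖` for `ψ ∈ H⁽ⁿ⁻¹⁾`, then both `1 - G` and
`(1-G)⁻¹ = Σⱼ Gʲ` map the domain `D(N) = {ψ : Σ n² ‖P n ψ‖² < ∞}` of the number operator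
into itself. -/
theorem one_sub_G_and_inverse_preserve_number_domain
    {H : Type*} [NormedAddCommGroup H] [InnerProductSpace ℂ H] [CompleteSpace H]
    (P : ℕ → (H →L[ℂ] H))
    (hProj : ∀ n, (P n).comp (P n) = P n)
    (hSelfAdj : ∀ n, IsSelfAdjoint (P n))
    (hOrth : ∀ n m, n ≠ m → (P n).comp (P m) = 0)
    (hComplete : ∀ ψ : H, HasSum (fun n => P n ψ) ψ)
    (G : H →L[ℂ] H)
    (hGrade : ∀ n, G.comp (P n) = (P (n + 1)).comp (G.comp (P n)))
    (C : ℝ) (hC : 0 < C)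
    (hGbound : ∀ n (ψ : H), ‖G (P n ψ)‖ ≤ C * ((n : ℝ) + 1) ^ (-(1 : ℝ) / 4) * ‖P n ψ‖)
    (hGnum : ∀ n : ℕ, 1 ≤ n → ∀ ψ : H,
      ‖(n : ℝ) • G (P (n - 1) ψ)‖ ≤ C * (n : ℝ) ^ ((3 : ℝ) / 4) * ‖P (n - 1) ψ‖)
    (Ginv : H →L[ℂ] H)
    (hGinv₁ : Ginv.comp (1 - G) = 1) (hGinv₂ : (1 - G).comp Ginv = 1)
    (hGinvSum : ∀ ψ : H, HasSum (fun j : ℕ => (G ^ j) ψ) (Ginv ψ)) :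
    ∀ ψ : H, Summable (fun n : ℕ => ((n : ℝ) ^ 2) * ‖P n ψ‖ ^ 2) →
      (Summable (fun n : ℕ => ((n : ℝ) ^ 2) * ‖P n ((1 - G) ψ)‖ ^ 2) ∧
       Summable (fun n : ℕ => ((n : ℝ) ^ 2) * ‖P n (Ginv ψ)‖ ^ 2)) :=
  one_sub_G_and_inverse_preserve_number_domain_general P hProj hOrth hComplete G hGrade C hC hGbound
    Ginv hGinvSum
end

section
/- There exists a constant C such that for all n ≥ 1 and all K = (k₁,…,k_n) ∈ ℝ^{3n}, Σ_{i=1}^n (1 + k_i²) ∫_{ℝ³} (n + 1 + K² + ξ²)^{-3/2+ε} (1+ξ²)^{-1-ε} dξ ≤ C, uniformly in K, for any fixed 0 < ε < 1/2, where K² = Σ_j |k_j|². -/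
/-!
Since `∑ᵢ (1 + |kᵢ|²) ≤ M := n + 1 + K²`, it suffices to bound
`M · ∫ (M + ξ²)^(-3/2+ε) (1 + ξ²)^(-1-ε) dξ` uniformly in `M > 0`. Replacing `(1 + ξ²)^(-1-ε)` by
the larger `|ξ|^(-2-2ε)`, the substitution `ξ = √M η` turns this into exactly
`∫ (1 + η²)^(-3/2+ε) |η|^(-2-2ε) dη`, independent of `M`. That integral is finite: the
singularity at `0` is integrable in `ℝ³` because `ε < 1/2`, and the integrand decays like
`|η|^(-5)`.
-/

open MeasureTheory Real Set Module

lemma integrableOn_Ioi_rpow_mul_add_sq_rpow {M p s : ℝ} (hM : 0 < M) (hs : -1 < s)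
    (hsp : s + 2 * p < -1) :
    IntegrableOn (fun y : ℝ ↦ y ^ s * (M + y ^ 2) ^ p) (Ioi 0) := by
  have hp : p ≤ 0 := by linarith
  have hmeas : AEStronglyMeasurable (fun y : ℝ ↦ y ^ s * (M + y ^ 2) ^ p) :=
    (by fun_prop : Measurable fun y : ℝ ↦ y ^ s * (M + y ^ 2) ^ p).aestronglyMeasurable
  rw [← Ioc_union_Ioi_eq_Ioi zero_le_one]
  refine IntegrableOn.union ?_ ?_
  · have hdom : IntegrableOn (fun y : ℝ ↦ M ^ p * y ^ s) (Ioc 0 1) :=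
      ((intervalIntegrable_iff_integrableOn_Ioc_of_le zero_le_one).mp
        (intervalIntegral.intervalIntegrable_rpow' hs)).const_mul _
    refine hdom.mono' hmeas.restrict (ae_restrict_of_forall_mem measurableSet_Ioc ?_)
    intro y ⟨hy0, _⟩
    rw [norm_of_nonneg (by positivity), mul_comm]
    exact mul_le_mul_of_nonneg_right (rpow_le_rpow_of_nonpos hM (by nlinarith) hp) (by positivity)
  · refine (integrableOn_Ioi_rpow_of_lt hsp zero_lt_one).mono' hmeas.restrict
      (ae_restrict_of_forall_mem measurableSet_Ioi ?_)
    intro y (hy : 1 < y)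
    have hy0 : 0 < y := zero_lt_one.trans hy
    rw [norm_of_nonneg (by positivity), rpow_add hy0, rpow_mul hy0.le]
    refine mul_le_mul_of_nonneg_left ?_ (by positivity)
    calc (M + y ^ 2) ^ p ≤ (y ^ 2) ^ p := rpow_le_rpow_of_nonpos (by positivity) (by linarith) hp
      _ = (y ^ (2 : ℝ)) ^ p := by rw [rpow_two]

lemma one_add_sq_rpow_le_rpow_two_mul {t r : ℝ} (ht : 0 < t) (hr : r ≤ 0) :
    (1 + t ^ 2) ^ r ≤ t ^ (2 * r) := by
  rw [rpow_mul ht.le, rpow_two]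
  exact rpow_le_rpow_of_nonpos (by positivity) (by linarith) hr

section

variable {E : Type*} [NormedAddCommGroup E] [NormedSpace ℝ E] [FiniteDimensional ℝ E]
  [MeasurableSpace E] [BorelSpace E] (μ : Measure E) [μ.IsAddHaarMeasure]

lemma integrable_add_norm_sq_rpow_mul_norm_rpow [Nontrivial E] {M p q : ℝ} (hM : 0 < M)
    (hq : -(finrank ℝ E : ℝ) < q) (hpq : 2 * p + q < -(finrank ℝ E : ℝ)) :
    Integrable (fun x : E ↦ (M + ‖x‖ ^ 2) ^ p * ‖x‖ ^ q) μ := by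
  rw [integrable_fun_norm_addHaar μ (f := fun y ↦ (M + y ^ 2) ^ p * y ^ q)]
  have hd : 1 ≤ finrank ℝ E := finrank_pos
  refine (integrableOn_congr_fun (fun y (hy : 0 < y) ↦ ?_) measurableSet_Ioi).mp
    (integrableOn_Ioi_rpow_mul_add_sq_rpow (s := (finrank ℝ E - 1 : ℕ) + q) hM
      (by push_cast [hd]; linarith) (by push_cast [hd]; linarith))
  simp only [smul_eq_mul, rpow_add hy, rpow_natCast]
  ring

lemma integral_add_norm_sq_rpow_mul_norm_rpow {M : ℝ} (hM : 0 < M) (p q : ℝ) :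
    ∫ x, (M + ‖x‖ ^ 2) ^ p * ‖x‖ ^ q ∂μ
      = M ^ ((finrank ℝ E : ℝ) / 2 + p + q / 2) * ∫ x, (1 + ‖x‖ ^ 2) ^ p * ‖x‖ ^ q ∂μ := by
  have hscale := μ.integral_comp_smul_of_nonneg (fun x : E ↦ (M + ‖x‖ ^ 2) ^ p * ‖x‖ ^ q)
    (√M) (hR := sqrt_nonneg M)
  have hpoint : ∀ x : E, (M + ‖√M • x‖ ^ 2) ^ p * ‖√M • x‖ ^ q
      = M ^ (p + q / 2) * ((1 + ‖x‖ ^ 2) ^ p * ‖x‖ ^ q) := by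
    intro x
    rw [norm_smul, norm_of_nonneg (sqrt_nonneg M), mul_pow, sq_sqrt hM.le,
      show M + M * ‖x‖ ^ 2 = M * (1 + ‖x‖ ^ 2) by ring, mul_rpow hM.le (by positivity),
      mul_rpow (sqrt_nonneg M) (norm_nonneg x), sqrt_eq_rpow, ← rpow_mul hM.le,
      rpow_add hM]
    ring_nf
  simp only [hpoint, integral_const_mul, smul_eq_mul] at hscale
  have hpow : √M ^ finrank ℝ E = M ^ ((finrank ℝ E : ℝ) / 2) := by
    rw [sqrt_eq_rpow, ← rpow_natCast, ← rpow_mul hM.le]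
    ring_nf
  rw [hpow] at hscale
  rw [add_assoc, rpow_add hM, mul_assoc, hscale,
    mul_inv_cancel_left₀ (by positivity)]

lemma integral_add_norm_sq_rpow_mul_one_add_norm_sq_rpow_le [Nontrivial E] {M p r : ℝ}
    (hM : 0 < M) (hr : r ≤ 0) (hdr : -(finrank ℝ E : ℝ) < 2 * r)
    (hpr : 2 * p + 2 * r < -(finrank ℝ E : ℝ)) :
    ∫ x, (M + ‖x‖ ^ 2) ^ p * (1 + ‖x‖ ^ 2) ^ r ∂μ
      ≤ M ^ ((finrank ℝ E : ℝ) / 2 + p + r) * ∫ x, (1 + ‖x‖ ^ 2) ^ p * ‖x‖ ^ (2 * r) ∂μ := by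
  calc ∫ x, (M + ‖x‖ ^ 2) ^ p * (1 + ‖x‖ ^ 2) ^ r ∂μ
      ≤ ∫ x, (M + ‖x‖ ^ 2) ^ p * ‖x‖ ^ (2 * r) ∂μ := by
        refine integral_mono_of_nonneg (.of_forall fun x ↦ by positivity)
          (integrable_add_norm_sq_rpow_mul_norm_rpow μ hM hdr (by linarith)) ?_
        filter_upwards [μ.ae_ne 0] with x hx
        gcongr
        exact one_add_sq_rpow_le_rpow_two_mul (norm_pos_iff.mpr hx) hr
    _ = _ := by
        rw [integral_add_norm_sq_rpow_mul_norm_rpow μ hM, mul_div_cancel_left₀ r two_ne_zero]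

end

/-- Uniform Λ-type Schur-test constant: for fixed `0 < ε < 1/2` there is `C` such that
for all `n ≥ 1` and all `K = (k₁,…,k_n) ∈ ℝ^{3n}`,
`Σᵢ (1+kᵢ²) ∫ (n+1+K²+ξ²)^{-3/2+ε} (1+ξ²)^{-1-ε} dξ ≤ C`. -/
theorem schur_lambda_bound (ε : ℝ) (hε0 : 0 < ε) (hε : ε < 1 / 2) :
    ∃ C : ℝ, ∀ n : ℕ, 1 ≤ n → ∀ k : Fin n → EuclideanSpace ℝ (Fin 3),
      ∑ i : Fin n, (1 + ‖k i‖ ^ 2) *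
        ∫ ξ : EuclideanSpace ℝ (Fin 3),
          ((n : ℝ) + 1 + (∑ j : Fin n, ‖k j‖ ^ 2) + ‖ξ‖ ^ 2) ^ (-(3 : ℝ) / 2 + ε) *
            (1 + ‖ξ‖ ^ 2) ^ (-(1 : ℝ) - ε)
      ≤ C := by
  refine ⟨∫ η : EuclideanSpace ℝ (Fin 3),
    (1 + ‖η‖ ^ 2) ^ (-(3 : ℝ) / 2 + ε) * ‖η‖ ^ (2 * (-(1 : ℝ) - ε)), fun n _ k ↦ ?_⟩
  set M : ℝ := n + 1 + ∑ j, ‖k j‖ ^ 2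
  have hM : 0 < M := by positivity
  have hweights : ∑ i, (1 + ‖k i‖ ^ 2) ≤ M := by
    simp [M, Finset.sum_add_distrib]
  have hscaling := integral_add_norm_sq_rpow_mul_one_add_norm_sq_rpow_le
    (volume : Measure (EuclideanSpace ℝ (Fin 3))) hM
    (p := -(3 : ℝ) / 2 + ε) (r := -(1 : ℝ) - ε) (by linarith)
    (by rw [finrank_euclideanSpace_fin]; push_cast; linarith)
    (by rw [finrank_euclideanSpace_fin]; push_cast; linarith)
  rw [finrank_euclideanSpace_fin, show ((3 : ℕ) : ℝ) / 2 + (-(3 : ℝ) / 2 + ε) + (-1 - ε) = -1 by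
    push_cast; ring, rpow_neg_one] at hscaling
  calc _ = (∑ i, (1 + ‖k i‖ ^ 2)) * ∫ ξ : EuclideanSpace ℝ (Fin 3),
        (M + ‖ξ‖ ^ 2) ^ (-(3 : ℝ) / 2 + ε) * (1 + ‖ξ‖ ^ 2) ^ (-(1 : ℝ) - ε) :=
        (Finset.sum_mul ..).symm
    _ ≤ M * (M⁻¹ * ∫ η : EuclideanSpace ℝ (Fin 3),
        (1 + ‖η‖ ^ 2) ^ (-(3 : ℝ) / 2 + ε) * ‖η‖ ^ (2 * (-(1 : ℝ) - ε))) := by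
      gcongr
    _ = _ := mul_inv_cancel_left₀ hM.ne' _
end

section
/- For 0 < s ≤ 1/2, n ∈ ℕ, and K = (k₁,…,k_{n+1}) ∈ ℝ^{3(n+1)}, the integral ∫_{ℝ³} (n+1+K²)^{-2} dk_{n+1} (with K² including k_{n+1}²) satisfies √(n+1) · ( ∫_{ℝ³} (n+1 + |k̂|² + |k_{n+1}|²)^{-2} dk_{n+1} )^{1/2} ≤ C (n+1)^{1/4+s}/√s uniformly in k̂ ∈ ℝ^{3n}, for an absolute constant C. -/
/-! Scaling `ξ = √a • η` gives `∫ (a + ‖ξ‖²)⁻² dξ = a^(-1/2) ∫ (1 + ‖η‖²)⁻² dη` on `ℝ³`, and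
the last integral is finite and positive. Since `a ≥ n + 1`, the left-hand side is at most a
constant times `(n + 1)^(1/4)`, which beats the claimed bound because `(n + 1)^s ≥ 1` and
`√s ≤ 1`. -/

open MeasureTheory Real Module

section Scaling

variable {E : Type*} [NormedAddCommGroup E] [NormedSpace ℝ E] [MeasurableSpace E] [BorelSpace E]
  [FiniteDimensional ℝ E] (μ : Measure E) [μ.IsAddHaarMeasure]

theorem integral_add_norm_sq_rpow_neg {a : ℝ} (ha : 0 < a) (r : ℝ) :
    ∫ x, (a + ‖x‖ ^ 2) ^ (-r) ∂μ =
      a ^ ((finrank ℝ E : ℝ) / 2 - r) * ∫ x, (1 + ‖x‖ ^ 2) ^ (-r) ∂μ := by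
  have hscale : ∀ x : E, (a + ‖√a • x‖ ^ 2) ^ (-r) = a ^ (-r) * (1 + ‖x‖ ^ 2) ^ (-r) := by
    intro x
    rw [norm_smul, mul_pow, norm_of_nonneg (sqrt_nonneg a), sq_sqrt ha.le,
      ← mul_rpow ha.le (by positivity), mul_one_add]
  have h := Measure.integral_comp_smul μ (fun x => (a + ‖x‖ ^ 2) ^ (-r)) √a
  simp only [hscale, integral_const_mul, smul_eq_mul] at h
  have hpow : (√a ^ finrank ℝ E) = a ^ ((finrank ℝ E : ℝ) / 2) := by
    rw [sqrt_eq_rpow, ← rpow_natCast, ← rpow_mul ha.le]; ring_nf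
  rw [hpow, abs_of_pos (by positivity), eq_inv_mul_iff_mul_eq₀ (by positivity)] at h
  rw [← h, sub_eq_add_neg, rpow_add ha, mul_assoc]

theorem integral_one_add_norm_sq_rpow_neg_pos [Nontrivial E] {r : ℝ}
    (hr : (finrank ℝ E : ℝ) < 2 * r) :
    0 < ∫ x, (1 + ‖x‖ ^ 2) ^ (-r) ∂μ := by
  have hint : Integrable (fun x : E => (1 + ‖x‖ ^ 2) ^ (-r)) μ := by
    simpa [neg_div, mul_div_cancel_left₀] using integrable_rpow_neg_one_add_norm_sq (μ := μ) hr
  rw [integral_pos_iff_support_of_nonneg (fun x => by positivity) hint]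
  have : Function.support (fun x : E => (1 + ‖x‖ ^ 2) ^ (-r)) = Set.univ :=
    Set.eq_univ_of_forall fun x => (rpow_pos_of_pos (by positivity) _).ne'
  rw [this]; exact Measure.measure_univ_pos.mpr (NeZero.ne μ)

end Scaling

theorem sqrt_mul_sqrt_integral_add_norm_sq_rpow_neg_two_le {a b : ℝ} (hb : 0 < b)
    (hba : b ≤ a) :
    √b * √(∫ ξ : EuclideanSpace ℝ (Fin 3), (a + ‖ξ‖ ^ 2) ^ (-(2 : ℝ))) ≤
      √(∫ ξ : EuclideanSpace ℝ (Fin 3), (1 + ‖ξ‖ ^ 2) ^ (-(2 : ℝ))) * b ^ ((1 : ℝ) / 4) := by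
  set I := ∫ ξ : EuclideanSpace ℝ (Fin 3), (1 + ‖ξ‖ ^ 2) ^ (-(2 : ℝ))
  have hI : 0 ≤ I := integral_nonneg fun ξ => by positivity
  have hscale :
      ∫ ξ : EuclideanSpace ℝ (Fin 3), (a + ‖ξ‖ ^ 2) ^ (-(2 : ℝ)) = a ^ (-(1 : ℝ) / 2) * I := by
    rw [integral_add_norm_sq_rpow_neg volume (hb.trans_le hba), finrank_euclideanSpace_fin]
    congr 1; norm_num
  have hdecay : a ^ (-(1 : ℝ) / 2) ≤ b ^ (-(1 : ℝ) / 2) :=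
    rpow_le_rpow_of_nonpos hb hba (by norm_num)
  calc √b * √(∫ ξ : EuclideanSpace ℝ (Fin 3), (a + ‖ξ‖ ^ 2) ^ (-(2 : ℝ)))
      ≤ √b * √(b ^ (-(1 : ℝ) / 2) * I) := by rw [hscale]; gcongr
    _ = √I * b ^ ((1 : ℝ) / 4) := by
      rw [← sqrt_mul hb.le, ← mul_assoc, ← rpow_one_add' hb.le (by norm_num), mul_comm,
        sqrt_mul hI, sqrt_eq_rpow (b ^ _), ← rpow_mul hb.le]
      norm_num

/-- Bound for the operator norm of `a(δ_x) L⁻¹`: there is an absolute constant `C` such that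
for all `0 < s ≤ 1/2`, `n ∈ ℕ` and `k̂ ∈ ℝ^{3n}`,
`√(n+1) (∫ (n+1+|k̂|²+|k_{n+1}|²)⁻² dk_{n+1})^{1/2} ≤ C (n+1)^{1/4+s}/√s`. -/
theorem annihilation_resolvent_bound :
    ∃ C : ℝ, 0 < C ∧ ∀ s : ℝ, 0 < s → s ≤ 1 / 2 → ∀ n : ℕ,
      ∀ khat : Fin n → EuclideanSpace ℝ (Fin 3),
        Real.sqrt ((n : ℝ) + 1) *
          Real.sqrt (∫ ξ : EuclideanSpace ℝ (Fin 3),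
            ((n : ℝ) + 1 + (∑ j : Fin n, ‖khat j‖ ^ 2) + ‖ξ‖ ^ 2) ^ (-(2 : ℝ)))
        ≤ C * ((n : ℝ) + 1) ^ ((1 : ℝ) / 4 + s) / Real.sqrt s := by
  have hI := integral_one_add_norm_sq_rpow_neg_pos (volume : Measure (EuclideanSpace ℝ (Fin 3)))
    (r := 2) (by norm_num)
  refine ⟨_, sqrt_pos.2 hI, fun s hs hs2 n khat => ?_⟩
  have hn : (1 : ℝ) ≤ n + 1 := by simp
  have hkhat : (n : ℝ) + 1 ≤ n + 1 + ∑ j : Fin n, ‖khat j‖ ^ 2 :=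
    le_add_of_nonneg_right (Finset.sum_nonneg fun j _ => sq_nonneg _)
  calc _ ≤ _ * ((n : ℝ) + 1) ^ ((1 : ℝ) / 4) :=
        sqrt_mul_sqrt_integral_add_norm_sq_rpow_neg_two_le (by positivity) hkhat
    _ ≤ _ * ((n : ℝ) + 1) ^ ((1 : ℝ) / 4 + s) := by
        gcongr; linarith
    _ ≤ _ := le_div_self (by positivity) (sqrt_pos.2 hs) (sqrt_le_one.2 (by linarith))
end
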